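/- arXiv:1908.09694 — 3 statements merged into one kernel-verified Lean document; each statement's English description precedes it below -/
import Mathlib

section
/- Fix an odd integer e ≥ 3 and t ≥ 0, and let λ be a partition with 2-core Δ_t whose abacus A(τ(λ)) is totally e-periodic. For every partition σ such that ã_σ(τ(λ)) is defined in the sl_∞-crystal, the partition ã_σ(λ) := τ^{−1}(ã_σ(τ(λ))) has the same e-core as λ. -/
/-!
The `e`-core of a partition is determined by the charges of the `e` runners of its β-set: the
runners of an `e`-core are initial segments of `ℤ`, and removing a rim `e`-hook moves one bead
down one step on a single runner. Undoing the twisted 2-quotient embeds the abacus of `τ(λ)`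
into `β(λ)` by `(v, j) ↦ 2v + a j`, with `a 0 - a 1 = e` and `e ∣ a j`. An edge of the
`sl_∞`-crystal moves the beads `(x - i, r i)`, `i < e`, of a period one column to the right.
As `e` is odd, their images `2x - 2i + a (r i)` represent every residue mod `e` exactly once,
and so do the images of the shifted beads; the shifted beads land on empty positions because
each row of the abacus keeps its charge. So every runner of `β(λ)` keeps its charge along the
crystal, and hence so does the `e`-core.
-/

namespace GUnBranching

/-- A partition, given by its (0-indexed) weakly decreasing, eventually zero
sequence of parts: `part k` is the (k+1)-st part `λ_{k+1}`. -/
structure Partition where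
  part : ℕ → ℕ
  antitone : ∀ i j : ℕ, i ≤ j → part j ≤ part i
  eventually_zero : ∃ N : ℕ, ∀ n : ℕ, N ≤ n → part n = 0

namespace Partition

/-- The set of boxes (row, column) (0-indexed) of the Young diagram of a partition. -/
def boxSet (p : Partition) : Set (ℕ × ℕ) := {b | b.2 < p.part b.1}

/-- The size `|λ|` of a partition: the number of boxes of its Young diagram. -/
noncomputable def size (p : Partition) : ℕ := p.boxSet.ncard

/-- The β-set `β(λ) = {λ_k - k + 1 : k ≥ 1}` (0-indexed: `{part k - k : k ∈ ℕ}`). -/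
def betaSet (p : Partition) : Set ℤ := {z | ∃ k : ℕ, z = (p.part k : ℤ) - k}

/-- The charged β-set `{λ_k + s - k + 1 : k ≥ 1}` of `(λ, s)`. -/
def chargedBetaSet (p : Partition) (s : ℤ) : Set ℤ :=
  {z | ∃ k : ℕ, z = (p.part k : ℤ) + s - k}

/-- The number of (nonzero) parts of a partition. -/
noncomputable def length (p : Partition) : ℕ := {k : ℕ | p.part k ≠ 0}.ncard

end Partition

/-- The empty partition `∅`. -/
def emptyPartition : Partition :=
  ⟨fun _ => 0, fun _ _ _ => le_rfl, ⟨0, fun _ _ => rfl⟩⟩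

/-- The partition `3^a 2^b 1^c` (a parts equal to 3, b parts equal to 2, c parts equal to 1). -/
def threeTwoOne (a b c : ℕ) : Partition where
  part k := if k < a then 3 else if k < a + b then 2 else if k < a + b + c then 1 else 0
  antitone i j h := by (try dsimp only); split_ifs <;> omega
  eventually_zero := ⟨a + b + c, fun n hn => by (try dsimp only); split_ifs <;> omega⟩

/-- The column partition `1^m`. -/
def column (m : ℕ) : Partition := threeTwoOne 0 0 m

/-- The staircase partition `Δ_t = (t, t-1, …, 2, 1)`. -/
def staircase (t : ℕ) : Partition where
  part k := t - k
  antitone i j h := Nat.sub_le_sub_left h t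
  eventually_zero := ⟨t, fun n hn => Nat.sub_eq_zero_of_le hn⟩

/-- The partition `Δ_t ⊔ 1^r` (staircase with a column of `r` extra parts equal to 1). -/
def staircaseColumn (t r : ℕ) : Partition where
  part k := if k < t then t - k else if k < t + r then 1 else 0
  antitone i j h := by (try dsimp only); split_ifs <;> omega
  eventually_zero := ⟨t + r, fun n hn => by (try dsimp only); split_ifs <;> omega⟩

/-- `p ⊔ 1^r` : append `r` extra parts equal to 1 to the partition `p`. -/
noncomputable def appendOnes (p : Partition) (r : ℕ) : Partition where
  part k := max (p.part k) (if k < p.length + r then 1 else 0)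
  antitone i j h := max_le_max (p.antitone i j h) (by split_ifs <;> omega)
  eventually_zero := by
    obtain ⟨N, hN⟩ := p.eventually_zero
    refine ⟨max N (p.length + r), fun n hn => ?_⟩
    have h1 : p.part n = 0 := hN n (le_trans (le_max_left _ _) hn)
    have h2 : ¬ n < p.length + r := by
      have := le_trans (le_max_right N (p.length + r)) hn
      omega
    simp [h1, h2]

/-- `mu` is obtained from `lam` by removing one rim `e`-hook: on β-sets, a bead `x`
with an empty spot at `x - e` is moved to `x - e`. -/
def RemoveHook (e : ℕ) (lam mu : Partition) : Prop :=
  ∃ x : ℤ, x ∈ lam.betaSet ∧ (x - e) ∉ lam.betaSet ∧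
    mu.betaSet = insert (x - e) (lam.betaSet \ {x})

/-- A partition is an `e`-core if no rim `e`-hook can be removed from it. -/
def IsECore (e : ℕ) (p : Partition) : Prop := ∀ mu : Partition, ¬ RemoveHook e p mu

/-- `core` is the `e`-core of `lam`: it is obtained from `lam` by repeatedly removing
rim `e`-hooks, and no further rim `e`-hook can be removed. -/
def HasECore (e : ℕ) (lam core : Partition) : Prop :=
  Relation.ReflTransGen (RemoveHook e) lam core ∧ IsECore e core

/-- `lam` and `mu` have the same `e`-core. -/
def SameECore (e : ℕ) (lam mu : Partition) : Prop :=
  ∃ core : Partition, HasECore e lam core ∧ HasECore e mu core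

/-- `(q1, q2)` is the 2-quotient of `lam`: the odd (resp. even) β-numbers of `lam`,
transformed by `v ↦ (v+1)/2` (resp. `v ↦ v/2`), form the β-set of `q1` (resp. `q2`)
for a suitable charge. -/
def IsTwoQuotient (lam q1 q2 : Partition) : Prop :=
  (∃ c : ℤ, q1.chargedBetaSet c = {z : ℤ | 2 * z - 1 ∈ lam.betaSet}) ∧
  (∃ c : ℤ, q2.chargedBetaSet c = {z : ℤ | 2 * z ∈ lam.betaSet})

/-- The charge `s_t`: `(-(t+1+e)/2, t/2)` for even `t`, `(-(t+1)/2, (t+e)/2)` for odd `t`. -/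
def tauCharge (e t : ℕ) : ℤ × ℤ :=
  if t % 2 = 0 then (-(((t : ℤ) + 1 + e) / 2), (t : ℤ) / 2)
  else (-(((t : ℤ) + 1) / 2), ((t : ℤ) + e) / 2)

/-- `bp` is the twisted 2-quotient `τ(lam)` of `lam`, a partition with 2-core `Δ_t`:
it is the 2-quotient for even `t` and the swapped 2-quotient for odd `t`; the
corresponding charge is `tauCharge e t`. -/
def IsTwistedQuotient (t : ℕ) (lam : Partition) (bp : Partition × Partition) : Prop :=
  HasECore 2 lam (staircase t) ∧
  (if t % 2 = 0 then IsTwoQuotient lam bp.1 bp.2 else IsTwoQuotient lam bp.2 bp.1)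

/-- The abacus of a charged bipartition: positions are (column, row) where row
`0 : Fin 2` is the bottom row (first component, charge `s.1`) and row `1 : Fin 2`
the top row (second component, charge `s.2`). -/
def abacus (bp : Partition × Partition) (s : ℤ × ℤ) : Set (ℤ × Fin 2) :=
  {b | b.1 ∈ (if b.2 = (0 : Fin 2) then bp.1.chargedBetaSet s.1 else bp.2.chargedBetaSet s.2)}

/-- `P` is an `e`-period of the abacus `A`: beads `(x, r 0), (x-1, r 1), …, (x-e+1, r (e-1))`
of `A` where `x` is the largest column containing a bead of `A`, `r i = 0` (bottom row)
whenever `(x - i, bottom)` is a bead of `A` (for `i < e-1`), and once in the bottom row the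
period stays in the bottom row. -/
def IsEPeriodOf (e : ℕ) (A P : Set (ℤ × Fin 2)) : Prop :=
  ∃ (x : ℤ) (r : ℕ → Fin 2),
    P = {b | ∃ i : ℕ, i < e ∧ b = ((x - i : ℤ), r i)} ∧
    (∀ i : ℕ, i < e → ((x - i : ℤ), r i) ∈ A) ∧
    (∀ b ∈ A, b.1 ≤ x) ∧
    (∀ i : ℕ, i + 1 < e → ((x - i : ℤ), (0 : Fin 2)) ∈ A → r i = 0) ∧
    (∀ i : ℕ, i + 1 < e → r i = 0 → r (i + 1) = 0)

/-- `P 0, P 1, P 2, …` is the sequence of `e`-periods of `A`: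
each `P k` is the `e`-period of `A` minus the previous periods. -/
def IsPeriodSeq (e : ℕ) (A : Set (ℤ × Fin 2)) (P : ℕ → Set (ℤ × Fin 2)) : Prop :=
  ∀ k : ℕ, IsEPeriodOf e (A \ ⋃ i ∈ Finset.range k, P i) (P k)

/-- The abacus `A` is totally `e`-periodic: the `k`-th `e`-period exists for every `k`. -/
def TotallyPeriodic (e : ℕ) (A : Set (ℤ × Fin 2)) : Prop :=
  ∃ P : ℕ → Set (ℤ × Fin 2), IsPeriodSeq e A P

/-- `P` is the `(k+1)`-st `e`-period of `A` (so `k = 0` gives the first `e`-period). -/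
def IsKthPeriod (e : ℕ) (A : Set (ℤ × Fin 2)) (k : ℕ) (P : Set (ℤ × Fin 2)) : Prop :=
  ∃ Q : ℕ → Set (ℤ × Fin 2),
    (∀ i : ℕ, i ≤ k → IsEPeriodOf e (A \ ⋃ j ∈ Finset.range i, Q j) (Q i)) ∧ Q k = P

/-- Shift a set of abacus positions one step to the right. -/
def shiftRight (P : Set (ℤ × Fin 2)) : Set (ℤ × Fin 2) := {b | (b.1 - 1, b.2) ∈ P}

/-- Edge of the `sl_∞`-crystal moving the `(k+1)`-st `e`-period one step to the right:
the shifted period must again be the `(k+1)`-st `e`-period of the resulting abacus. -/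
def SlInfEdgeAt (e : ℕ) (s : ℤ × ℤ) (k : ℕ) (lam mu : Partition × Partition) : Prop :=
  TotallyPeriodic e (abacus lam s) ∧ TotallyPeriodic e (abacus mu s) ∧
  ∃ P : Set (ℤ × Fin 2),
    IsKthPeriod e (abacus lam s) k P ∧
    abacus mu s = (abacus lam s \ P) ∪ shiftRight P ∧
    IsKthPeriod e (abacus mu s) k (shiftRight P)

/-- Edge of the `sl_∞`-crystal. -/
def SlInfEdge (e : ℕ) (s : ℤ × ℤ) (lam mu : Partition × Partition) : Prop :=
  ∃ k : ℕ, SlInfEdgeAt e s k lam mu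

/-- A source vertex of the `sl_∞`-crystal: a vertex (totally `e`-periodic abacus)
with no incoming edge. -/
def IsSlInfSource (e : ℕ) (s : ℤ × ℤ) (bp : Partition × Partition) : Prop :=
  TotallyPeriodic e (abacus bp s) ∧ ∀ lam : Partition × Partition, ¬ SlInfEdge e s lam bp

/-- A box of a bipartition: (component, row, column), all 0-indexed
(component `0 : Fin 2` is the first component `λ¹`). -/
abbrev Box := Fin 2 × ℕ × ℕ

/-- The component of a bipartition indexed by `j : Fin 2`. -/
def comp (bp : Partition × Partition) (j : Fin 2) : Partition :=
  if j = 0 then bp.1 else bp.2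

/-- `b` is a box of the bipartition `bp`. -/
def IsBoxOf (bp : Partition × Partition) (b : Box) : Prop :=
  b.2.2 < (comp bp b.1).part b.2.1

/-- The (charged) content `ct(b) = y - x + s_j` of a box `b = (j, x, y)`. -/
def content (s : ℤ × ℤ) (b : Box) : ℤ :=
  (b.2.2 : ℤ) - (b.2.1 : ℤ) + (if b.1 = 0 then s.1 else s.2)

/-- `b` is an addable box of the bipartition `bp`. -/
def IsAddable (bp : Partition × Partition) (b : Box) : Prop :=
  b.2.2 = (comp bp b.1).part b.2.1 ∧
  (b.2.1 = 0 ∨ (comp bp b.1).part b.2.1 < (comp bp b.1).part (b.2.1 - 1))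

/-- `b` is a removable box of the bipartition `bp`. -/
def IsRemovable (bp : Partition × Partition) (b : Box) : Prop :=
  b.2.2 + 1 = (comp bp b.1).part b.2.1 ∧
  (comp bp b.1).part (b.2.1 + 1) < (comp bp b.1).part b.2.1

/-- The total order on addable/removable boxes: `b ≤ b'` iff `b = b'`, or
`ct(b) < ct(b')`, or the contents are equal, `b` lies in the second component and
`b'` in the first. -/
def boxLE (s : ℤ × ℤ) (b b' : Box) : Prop :=
  b = b' ∨ content s b < content s b' ∨
    (content s b = content s b' ∧ b.1 = 1 ∧ b'.1 = 0)

/-- The set of addable or removable boxes of residue `i` (the letters of the `i`-word). -/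
def IWord (e : ℕ) (s : ℤ × ℤ) (bp : Partition × Partition) (i : ZMod e) : Set Box :=
  {b | (IsAddable bp b ∨ IsRemovable bp b) ∧ ((content s b : ZMod e) = i)}

/-- A removable box of residue `i` surviving the Kashiwara cancellation: reading the
`i`-word in increasing order and cancelling each removable box with a following addable
box (recursively cancelling adjacent removable-addable pairs), `b` is not cancelled.
Equivalently, every final segment of the `i`-word starting at `b` contains strictly
more removable than addable boxes. -/
def SurvivingRemovable (e : ℕ) (s : ℤ × ℤ) (bp : Partition × Partition)
    (i : ZMod e) (b : Box) : Prop :=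
  b ∈ IWord e s bp i ∧ IsRemovable bp b ∧
  ∀ c ∈ IWord e s bp i, boxLE s b c →
    {d : Box | d ∈ IWord e s bp i ∧ IsAddable bp d ∧ boxLE s b d ∧ boxLE s d c}.ncard <
    {d : Box | d ∈ IWord e s bp i ∧ IsRemovable bp d ∧ boxLE s b d ∧ boxLE s d c}.ncard

/-- The good removable `i`-box: the smallest removable `i`-box surviving the
Kashiwara cancellation. -/
def IsGoodRemovable (e : ℕ) (s : ℤ × ℤ) (bp : Partition × Partition)
    (i : ZMod e) (b : Box) : Prop :=
  SurvivingRemovable e s bp i b ∧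
  ∀ b' : Box, SurvivingRemovable e s bp i b' → boxLE s b b'

/-- An addable box of residue `i` surviving the Kashiwara cancellation. -/
def SurvivingAddable (e : ℕ) (s : ℤ × ℤ) (bp : Partition × Partition)
    (i : ZMod e) (b : Box) : Prop :=
  b ∈ IWord e s bp i ∧ IsAddable bp b ∧
  ∀ c ∈ IWord e s bp i, boxLE s c b →
    {d : Box | d ∈ IWord e s bp i ∧ IsRemovable bp d ∧ boxLE s c d ∧ boxLE s d b}.ncard <
    {d : Box | d ∈ IWord e s bp i ∧ IsAddable bp d ∧ boxLE s c d ∧ boxLE s d b}.ncard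

/-- The good addable `i`-box: the largest addable `i`-box surviving the
Kashiwara cancellation. -/
def IsGoodAddable (e : ℕ) (s : ℤ × ℤ) (bp : Partition × Partition)
    (i : ZMod e) (b : Box) : Prop :=
  SurvivingAddable e s bp i b ∧
  ∀ b' : Box, SurvivingAddable e s bp i b' → boxLE s b' b

/-- A source vertex of the `ŝl_e`-crystal: no good removable `i`-box for any residue `i`. -/
def IsSlESource (e : ℕ) (s : ℤ × ℤ) (bp : Partition × Partition) : Prop :=
  ∀ (i : ZMod e) (b : Box), ¬ IsGoodRemovable e s bp i b

/-- `bp'` is obtained from `bp` by adding the box `b`. -/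
def AddBox (bp : Partition × Partition) (b : Box) (bp' : Partition × Partition) : Prop :=
  if b.1 = 0 then
    bp'.2 = bp.2 ∧ bp'.1.part = Function.update bp.1.part b.2.1 (bp.1.part b.2.1 + 1)
  else
    bp'.1 = bp.1 ∧ bp'.2.part = Function.update bp.2.part b.2.1 (bp.2.part b.2.1 + 1)

/-- Dominance order: `Dominates mu la` means `la ⊴ mu`. -/
def Dominates (mu la : Partition) : Prop :=
  ∀ k : ℕ, ∑ i ∈ Finset.range k, la.part i ≤ ∑ i ∈ Finset.range k, mu.part i

/-- Maya diagrams, such as the β-sets of partitions. -/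
def IsMaya (U : Set ℤ) : Prop := (∃ M : ℤ, Set.Iio M ⊆ U) ∧ BddAbove U

noncomputable def charge (U : Set ℤ) : ℤ :=
  ((U \ Set.Iio 0).ncard : ℤ) - ((Set.Iio 0 \ U).ncard : ℤ)

namespace IsMaya

variable {U : Set ℤ}

theorem finite_sdiff_Iio (hU : IsMaya U) (M : ℤ) : (U \ Set.Iio M).Finite := by
  obtain ⟨B, hB⟩ := hU.2
  exact (Set.finite_Icc M B).subset fun z hz => ⟨not_lt.1 hz.2, hB hz.1⟩

theorem finite_Iio_sdiff (hU : IsMaya U) (M : ℤ) : (Set.Iio M \ U).Finite := by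
  obtain ⟨M₀, hM₀⟩ := hU.1
  exact (Set.finite_Ico M₀ M).subset fun z hz =>
    ⟨not_lt.1 fun h => hz.2 (hM₀ h), hz.1⟩

theorem union (hU : IsMaya U) {F : Set ℤ} (hF : F.Finite) : IsMaya (U ∪ F) :=
  ⟨hU.1.imp fun _ h => h.trans Set.subset_union_left, hU.2.union hF.bddAbove⟩

theorem sdiff (hU : IsMaya U) {F : Set ℤ} (hF : F.Finite) : IsMaya (U \ F) := by
  obtain ⟨M, hM⟩ := hU.1
  obtain ⟨L, hL⟩ := hF.bddBelow
  refine ⟨⟨min M L, fun z hz => ⟨hM (lt_of_lt_of_le hz (min_le_left M L)), fun hzF => ?_⟩⟩,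
    hU.2.mono Set.sdiff_subset⟩
  exact absurd (hL hzF) (not_le.2 (lt_of_lt_of_le hz (min_le_right M L)))

theorem preimage_sub (hU : IsMaya U) (d : ℤ) : IsMaya ((· - d) ⁻¹' U) := by
  obtain ⟨⟨M, hM⟩, ⟨B, hB⟩⟩ := hU
  refine ⟨⟨M + d, fun z hz => hM (show z - d < M by simp only [Set.mem_Iio] at hz; omega)⟩,
    ⟨B + d, fun z hz => ?_⟩⟩
  have : z - d ≤ B := hB hz
  omega

end IsMaya

theorem charge_window_succ {U : Set ℤ} (hU : IsMaya U) (M : ℤ) :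
    ((U \ Set.Iio (M + 1)).ncard : ℤ) - (Set.Iio (M + 1) \ U).ncard + (M + 1) =
      ((U \ Set.Iio M).ncard : ℤ) - (Set.Iio M \ U).ncard + M := by
  by_cases hMU : M ∈ U
  · have h₁ : U \ Set.Iio M = insert M (U \ Set.Iio (M + 1)) := by
      ext z; simp only [Set.mem_sdiff, Set.mem_Iio, Set.mem_insert_iff]; grind
    have h₂ : Set.Iio (M + 1) \ U = Set.Iio M \ U := by
      ext z; simp only [Set.mem_sdiff, Set.mem_Iio]; grind
    rw [h₁, h₂, Set.ncard_insert_of_notMem (by simp) (hU.finite_sdiff_Iio _)]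
    push_cast; ring
  · have h₁ : U \ Set.Iio M = U \ Set.Iio (M + 1) := by
      ext z; simp only [Set.mem_sdiff, Set.mem_Iio]; grind
    have h₂ : Set.Iio (M + 1) \ U = insert M (Set.Iio M \ U) := by
      ext z; simp only [Set.mem_sdiff, Set.mem_Iio, Set.mem_insert_iff]; grind
    rw [h₁, h₂, Set.ncard_insert_of_notMem (by simp) (hU.finite_Iio_sdiff _)]
    push_cast; ring

theorem charge_eq_window {U : Set ℤ} (hU : IsMaya U) (M : ℤ) :
    charge U = ((U \ Set.Iio M).ncard : ℤ) - (Set.Iio M \ U).ncard + M := by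
  induction M using Int.induction_on with
  | zero => simp [charge]
  | succ i ih => rw [ih, ← charge_window_succ hU]
  | pred i ih =>
    have := charge_window_succ hU (-(i : ℤ) - 1)
    rw [sub_add_cancel] at this
    rw [ih, this]

theorem charge_eq_of_Iio_subset {U : Set ℤ} (hU : IsMaya U) {M : ℤ} (hM : Set.Iio M ⊆ U) :
    charge U = (U \ Set.Iio M).ncard + M := by
  rw [charge_eq_window hU M, Set.sdiff_eq_empty.2 hM, Set.ncard_empty]
  ring

theorem charge_Iio (n : ℤ) : charge (Set.Iio n) = n := by
  rw [charge_eq_of_Iio_subset ⟨⟨n, le_rfl⟩, ⟨n, fun _ h => h.le⟩⟩ le_rfl, Set.sdiff_self,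
    Set.ncard_empty]
  simp

theorem charge_union_of_disjoint {U F : Set ℤ} (hU : IsMaya U) (hF : F.Finite)
    (hUF : Disjoint U F) : charge (U ∪ F) = charge U + F.ncard := by
  obtain ⟨M, hM⟩ := hU.1
  obtain ⟨L, hL⟩ := hF.bddBelow
  have hM' : Set.Iio (min M L) ⊆ U := (Set.Iio_subset_Iio (min_le_left M L)).trans hM
  have hF' : Disjoint (U \ Set.Iio (min M L)) F := hUF.mono_left Set.sdiff_subset
  have hwin : (U ∪ F) \ Set.Iio (min M L) = (U \ Set.Iio (min M L)) ∪ F := by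
    rw [Set.union_sdiff_distrib, sdiff_eq_left.2 (Set.disjoint_left.2 fun z hz hz' =>
      not_lt.2 ((min_le_right M L).trans (hL hz)) (Set.mem_Iio.1 hz'))]
  rw [charge_eq_of_Iio_subset (hU.union hF) (hM'.trans Set.subset_union_left),
    charge_eq_of_Iio_subset hU hM', hwin, Set.ncard_union_eq hF' (hU.finite_sdiff_Iio _) hF]
  push_cast; ring

theorem charge_sdiff_of_subset {U F : Set ℤ} (hU : IsMaya U) (hF : F.Finite) (hFU : F ⊆ U) :
    charge (U \ F) = charge U - F.ncard := by
  have := charge_union_of_disjoint (hU.sdiff hF) hF Set.disjoint_sdiff_left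
  rw [Set.sdiff_union_of_subset hFU] at this
  omega

theorem charge_preimage_sub {U : Set ℤ} (hU : IsMaya U) (d : ℤ) :
    charge ((· - d) ⁻¹' U) = charge U + d := by
  obtain ⟨M, hM⟩ := hU.1
  have hM' : Set.Iio (M + d) ⊆ (· - d) ⁻¹' U := fun z hz =>
    hM (show z - d < M by simp only [Set.mem_Iio] at hz; omega)
  have hwin : (· - d) ⁻¹' U \ Set.Iio (M + d) = (· - d) ⁻¹' (U \ Set.Iio M) := by
    ext z; simp only [Set.mem_sdiff, Set.mem_preimage, Set.mem_Iio]
    exact and_congr_right' (by omega)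
  rw [charge_eq_of_Iio_subset (hU.preimage_sub d) hM', charge_eq_of_Iio_subset hU hM, hwin,
    Set.ncard_preimage_of_injective_subset_range sub_left_injective
      fun z _ => ⟨z + d, add_sub_cancel_right z d⟩]
  ring

theorem isMaya_range_of_strictAnti {f : ℕ → ℤ} (hf : StrictAnti f) {K : ℕ}
    (hK : Set.Iio (f K) ⊆ Set.range f) : IsMaya (Set.range f) :=
  ⟨⟨f K, hK⟩, ⟨f 0, by rintro _ ⟨k, rfl⟩; exact hf.antitone (Nat.zero_le k)⟩⟩

theorem charge_range_of_strictAnti {f : ℕ → ℤ} (hf : StrictAnti f) {K : ℕ}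
    (hK : Set.Iio (f K) ⊆ Set.range f) : charge (Set.range f) = f K + K + 1 := by
  have hwin : Set.range f \ Set.Iio (f K) = f '' Set.Iic K := by
    ext z
    simp only [Set.mem_sdiff, Set.mem_range, Set.mem_Iio, not_lt, Set.mem_image, Set.mem_Iic]
    constructor
    · rintro ⟨⟨k, rfl⟩, hk⟩; exact ⟨k, hf.le_iff_ge.1 hk, rfl⟩
    · rintro ⟨k, hk, rfl⟩; exact ⟨⟨k, rfl⟩, hf.antitone hk⟩
  rw [charge_eq_of_Iio_subset (isMaya_range_of_strictAnti hf hK) hK, hwin,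
    Set.ncard_image_of_injective _ hf.injective, Set.ncard_Iic_nat]
  push_cast; ring

theorem exists_strictAnti_range_eq {U : Set ℤ} (hU : IsMaya U) :
    ∃ f : ℕ → ℤ, StrictAnti f ∧ Set.range f = U := by
  obtain ⟨⟨M, hM⟩, ⟨B, hB⟩⟩ := hU
  have hS : {n : ℕ | B - n ∈ U}.Infinite := Set.infinite_of_forall_exists_gt fun n =>
    ⟨n + (B - M + 1).toNat + 1, hM (show _ < M by push_cast; omega), by omega⟩
  refine ⟨fun k => B - Nat.nth (fun n => B - n ∈ U) k,
    fun a b hab => by simpa using Nat.nth_strictMono hS hab, ?_⟩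
  ext z
  constructor
  · rintro ⟨k, rfl⟩; exact Nat.nth_mem_of_infinite hS k
  · intro hz
    have hzB : z ≤ B := hB hz
    have hn : (B - z).toNat ∈ Set.range (Nat.nth fun n => B - n ∈ U) := by
      rw [Nat.range_nth_of_infinite hS]
      show B - ((B - z).toNat : ℤ) ∈ U
      rwa [Int.toNat_of_nonneg (by omega), sub_sub_cancel]
    obtain ⟨k, hk⟩ := hn
    exact ⟨k, by simp only [hk]; omega⟩

theorem exists_partition_betaSet_eq {U : Set ℤ} (hU : IsMaya U) (hcharge : charge U = 1) :
    ∃ p : Partition, p.betaSet = U := by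
  obtain ⟨f, hf, rfl⟩ := exists_strictAnti_range_eq hU
  obtain ⟨M, hM⟩ := hU.1
  have hsucc : ∀ k, f (k + 1) + 1 ≤ f k := fun k => hf (Nat.lt_succ_self k)
  have hanti : Antitone fun k => f k + k := antitone_nat_of_succ_le fun k => by
    have := hsucc k; push_cast; omega
  set K := (f 0 - M + 1).toNat
  have hK : Set.Iio (f K) ⊆ Set.range f := fun z hz => hM (by
    have := hanti (Nat.zero_le K)
    simp only [Set.mem_Iio, CharP.cast_eq_zero, add_zero] at hz this ⊢
    omega)
  have hfK : f K + K = 0 := by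
    have := charge_range_of_strictAnti hf hK
    omega
  -- Every integer below `f K` is a bead, so from `K` on `f` decreases by exactly one.
  have hstable : ∀ k, K ≤ k → f k + k = 0 := by
    intro k hk
    induction k, hk using Nat.le_induction with
    | base => exact hfK
    | succ k hk ih =>
      obtain ⟨j, hj⟩ := hK (show f k - 1 < f K from by have := hf.antitone hk; omega)
      have hkj : k + 1 ≤ j := hf.lt_iff_gt.1 (by omega)
      have := hf.antitone hkj
      have := hsucc k
      push_cast; omega
  have hnonneg : ∀ k, 0 ≤ f k + k := fun k => by
    have h₁ : f (max k K) + (max k K : ℕ) ≤ f k + k := hanti (le_max_left k K)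
    have := hstable _ (le_max_right k K)
    omega
  refine ⟨⟨fun k => (f k + k).toNat, fun i j hij => Int.toNat_le_toNat (hanti hij),
    ⟨K, fun n hn => by simp [hstable n hn]⟩⟩, ?_⟩
  ext z
  simp only [Partition.betaSet, Set.mem_ofPred_eq, Set.mem_range]
  constructor
  · rintro ⟨k, rfl⟩; exact ⟨k, by have := hnonneg k; omega⟩
  · rintro ⟨k, rfl⟩; exact ⟨k, by have := hnonneg k; omega⟩

namespace Partition

def betaFun (p : Partition) (k : ℕ) : ℤ := (p.part k : ℤ) - k

theorem betaFun_strictAnti (p : Partition) : StrictAnti p.betaFun :=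
  strictAnti_nat_of_succ_lt fun k => by
    have := p.antitone k (k + 1) k.le_succ
    simp only [betaFun]; push_cast; omega

theorem betaSet_eq_range (p : Partition) : p.betaSet = Set.range p.betaFun := by
  ext z; simp [betaSet, betaFun, eq_comm]

theorem Iio_subset_range_betaFun {p : Partition} {N : ℕ} (hN : ∀ n, N ≤ n → p.part n = 0) :
    Set.Iio (p.betaFun N) ⊆ Set.range p.betaFun := fun z hz => by
  simp only [Set.mem_Iio, betaFun, hN N le_rfl] at hz
  refine ⟨(-z).toNat, ?_⟩
  simp only [betaFun, hN (-z).toNat (by omega)]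
  omega

theorem isMaya_betaSet (p : Partition) : IsMaya p.betaSet := by
  obtain ⟨N, hN⟩ := p.eventually_zero
  rw [betaSet_eq_range]
  exact isMaya_range_of_strictAnti p.betaFun_strictAnti (Iio_subset_range_betaFun hN)

theorem charge_betaSet (p : Partition) : charge p.betaSet = 1 := by
  obtain ⟨N, hN⟩ := p.eventually_zero
  rw [betaSet_eq_range,
    charge_range_of_strictAnti p.betaFun_strictAnti (Iio_subset_range_betaFun hN)]
  simp [betaFun, hN N le_rfl]

theorem betaSet_injective : Function.Injective betaSet := by
  intro p q h
  have hfun := (p.betaFun_strictAnti.dual_right.range_inj q.betaFun_strictAnti.dual_right).1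
    (by rw [Set.range_comp, Set.range_comp, ← betaSet_eq_range, ← betaSet_eq_range, h])
  obtain ⟨pp, _, _⟩ := p
  obtain ⟨qp, _, _⟩ := q
  congr
  funext k
  have := congrFun hfun k
  simp only [Function.comp_apply, OrderDual.toDual_inj, betaFun] at this
  omega

theorem chargedBetaSet_eq_preimage (p : Partition) (s : ℤ) :
    p.chargedBetaSet s = (· - s) ⁻¹' p.betaSet := by
  ext z
  simp only [chargedBetaSet, betaSet, Set.mem_ofPred_eq, Set.mem_preimage]
  exact exists_congr fun k => by omega

theorem isMaya_chargedBetaSet (p : Partition) (s : ℤ) : IsMaya (p.chargedBetaSet s) := by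
  rw [chargedBetaSet_eq_preimage]; exact p.isMaya_betaSet.preimage_sub s

theorem charge_chargedBetaSet (p : Partition) (s : ℤ) : charge (p.chargedBetaSet s) = s + 1 := by
  rw [chargedBetaSet_eq_preimage, charge_preimage_sub p.isMaya_betaSet, charge_betaSet, add_comm]

end Partition

def runner (e c : ℤ) (U : Set ℤ) : Set ℤ := (fun m => c + e * m) ⁻¹' U

theorem IsMaya.runner {U : Set ℤ} (hU : IsMaya U) {e : ℤ} (he : 0 < e) (c : ℤ) :
    IsMaya (runner e c U) := by
  obtain ⟨⟨M, hM⟩, ⟨B, hB⟩⟩ := hU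
  refine ⟨⟨min 0 (M - c), fun m hm => hM ?_⟩, ⟨max 0 (B - c), fun m hm => ?_⟩⟩
  · simp only [Set.mem_Iio, lt_min_iff] at hm ⊢
    nlinarith
  · have : c + e * m ≤ B := hB hm
    rcases le_or_gt m 0 with h | h
    · exact h.trans (le_max_left _ _)
    · exact le_max_of_le_right (by nlinarith)

theorem charge_runner_sdiff_union {e c : ℤ} (he : 0 < e) {U P Q : Set ℤ} (hU : IsMaya U)
    (hPU : P ⊆ U) (hP : P.Finite) (hQ : Q.Finite) (hdisj : Disjoint (U \ P) Q)
    (hcard : (runner e c Q).ncard = (runner e c P).ncard) :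
    charge (runner e c ((U \ P) ∪ Q)) = charge (runner e c U) := by
  have hfin : ∀ F : Set ℤ, F.Finite → (runner e c F).Finite := fun F hF =>
    hF.preimage fun _ _ _ _ h => mul_left_cancel₀ he.ne' (add_left_cancel h)
  have hPr := hfin P hP
  have hsplit : runner e c ((U \ P) ∪ Q) = (runner e c U \ runner e c P) ∪ runner e c Q := rfl
  rw [hsplit, charge_union_of_disjoint ((hU.runner he c).sdiff hPr) (hfin Q hQ) (hdisj.preimage _),
    charge_sdiff_of_subset (hU.runner he c) hPr (Set.preimage_mono hPU), hcard]
  ring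

namespace RemoveHook

variable {e : ℕ} {p q : Partition}

theorem charge_runner (he : 0 < e) (h : RemoveHook e p q) (c : ℤ) :
    charge (runner e c q.betaSet) = charge (runner e c p.betaSet) := by
  obtain ⟨x, hx, hx', hq⟩ := h
  have hshift : runner e c {x - e} = (· + 1) ⁻¹' runner e c {x} := by
    ext m
    simp only [runner, Set.mem_preimage, Set.mem_singleton_iff]
    constructor <;> intro h <;> linarith
  rw [hq, Set.insert_eq, Set.union_comm]
  refine charge_runner_sdiff_union (by exact_mod_cast he) p.isMaya_betaSet
    (Set.singleton_subset_iff.2 hx) (Set.finite_singleton x) (Set.finite_singleton _)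
    (Set.disjoint_singleton_right.2 fun h => hx' h.1) ?_
  rw [hshift, Set.ncard_preimage_of_injective_subset_range (add_left_injective 1)
    fun m _ => ⟨m - 1, sub_add_cancel m 1⟩]

end RemoveHook

theorem charge_runner_of_reflTransGen {e : ℕ} (he : 0 < e) {p q : Partition}
    (h : Relation.ReflTransGen (RemoveHook e) p q) (c : ℤ) :
    charge (runner e c q.betaSet) = charge (runner e c p.betaSet) := by
  induction h with
  | refl => rfl
  | tail _ hstep ih => rw [hstep.charge_runner he c, ih]

theorem exists_betaSet_eq_insert_sdiff {e : ℕ} {p : Partition} {x : ℤ} (hx : x ∈ p.betaSet)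
    (hx' : x - e ∉ p.betaSet) :
    ∃ q : Partition, q.betaSet = insert (x - e) (p.betaSet \ {x}) := by
  have hU := p.isMaya_betaSet
  have hdisj : Disjoint (p.betaSet \ {x}) {x - (e : ℤ)} :=
    Set.disjoint_singleton_right.2 fun h => hx' h.1
  rw [Set.insert_eq, Set.union_comm]
  refine exists_partition_betaSet_eq
    ((hU.sdiff (Set.finite_singleton x)).union (Set.finite_singleton _)) ?_
  rw [charge_union_of_disjoint (hU.sdiff (Set.finite_singleton x)) (Set.finite_singleton _) hdisj,
    charge_sdiff_of_subset hU (Set.finite_singleton x) (Set.singleton_subset_iff.2 hx),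
    p.charge_betaSet]
  simp

theorem isECore_iff {e : ℕ} {p : Partition} :
    IsECore e p ↔ ∀ x ∈ p.betaSet, x - e ∈ p.betaSet := by
  refine ⟨fun h x hx => ?_, fun h q ⟨x, hx, hx', _⟩ => hx' (h x hx)⟩
  by_contra hx'
  obtain ⟨q, hq⟩ := exists_betaSet_eq_insert_sdiff hx hx'
  exact h q ⟨x, hx, hx', hq⟩

theorem IsMaya.eq_Iio_charge {U : Set ℤ} (hU : IsMaya U) (h : ∀ m ∈ U, m - 1 ∈ U) :
    U = Set.Iio (charge U) := by
  obtain ⟨⟨M, hM⟩, ⟨B, hB⟩⟩ := hU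
  obtain ⟨z, hz, hzmax⟩ := Int.exists_greatest_of_bdd ⟨B, fun z hz => hB hz⟩
    ⟨M - 1, hM (sub_one_lt M)⟩
  have hIic : U = Set.Iic z := by
    refine Set.Subset.antisymm (fun y hy => hzmax y hy) fun y hy => ?_
    induction y, hy using Int.leInductionDown with
    | base => exact hz
    | pred n _ ih => exact h n ih
  have hIio : Set.Iic z = Set.Iio (z + 1) := by ext; simp
  rw [hIic, hIio, charge_Iio]

theorem eq_of_isECore_of_charge_runner_eq {e : ℕ} (he : 0 < e) {p q : Partition}
    (hp : IsECore e p) (hq : IsECore e q)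
    (h : ∀ c : ℤ, charge (runner e c p.betaSet) = charge (runner e c q.betaSet)) : p = q := by
  have hrunner : ∀ r : Partition, IsECore e r → ∀ c : ℤ,
      runner e c r.betaSet = Set.Iio (charge (runner e c r.betaSet)) := fun r hr c =>
    (r.isMaya_betaSet.runner (by exact_mod_cast he) c).eq_Iio_charge fun m hm => by
      have := isECore_iff.1 hr _ hm
      simp only [runner, Set.mem_preimage] at this ⊢
      rwa [mul_sub_one, ← add_sub_assoc]
  refine Partition.betaSet_injective (Set.ext fun z => ?_)
  have hz : ∀ U : Set ℤ, z ∈ U ↔ z / e ∈ runner e (z % e) U := fun U => by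
    simp only [runner, Set.mem_preimage, Int.emod_add_mul_ediv]
  rw [hz, hz, hrunner p hp, hrunner q hq, h]

noncomputable def weightAbove (M : ℤ) (U : Set ℤ) : ℕ := ∑ᶠ z ∈ U \ Set.Iio M, (z - M).toNat

theorem weightAbove_insert_sdiff {M x y : ℤ} {U : Set ℤ} (hU : IsMaya U) (hx : x ∈ U)
    (hy : y ∉ U) (hMy : M ≤ y) (hyx : y < x) :
    weightAbove M (insert y (U \ {x})) + (x - y).toNat = weightAbove M U := by
  set W := (U \ Set.Iio M) \ {x}
  have hW : W.Finite := (hU.finite_sdiff_Iio M).sdiff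
  have hxW : U \ Set.Iio M = insert x W := by
    rw [Set.insert_sdiff_singleton, Set.insert_eq_of_mem
      (show x ∈ U \ Set.Iio M from ⟨hx, not_lt.2 (hMy.trans hyx.le)⟩)]
  have hyW : insert y (U \ {x}) \ Set.Iio M = insert y W := by
    ext z
    simp only [W, Set.mem_sdiff, Set.mem_insert_iff, Set.mem_singleton_iff, Set.mem_Iio]
    grind
  rw [weightAbove, weightAbove, hxW, hyW, finsum_mem_insert _ (fun h => h.2 rfl) hW,
    finsum_mem_insert _ (fun h => hy h.1.1) hW]
  omega

theorem exists_hasECore {e : ℕ} (he : 0 < e) (p : Partition) : ∃ q, HasECore e p q := by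
  obtain ⟨M, hM⟩ := p.isMaya_betaSet.1
  induction hw : weightAbove M p.betaSet using Nat.strong_induction_on generalizing p with
  | _ n ih =>
    by_cases hcore : ∀ x ∈ p.betaSet, x - e ∈ p.betaSet
    · exact ⟨p, .refl, isECore_iff.2 hcore⟩
    push Not at hcore
    obtain ⟨x, hx, hx'⟩ := hcore
    obtain ⟨q, hq⟩ := exists_betaSet_eq_insert_sdiff hx hx'
    have hMx : M ≤ x - e := not_lt.1 fun h => hx' (hM h)
    have hMq : Set.Iio M ⊆ q.betaSet := fun z hz => by
      rw [hq]
      refine Or.inr ⟨hM hz, fun h => ?_⟩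
      simp only [Set.mem_Iio, Set.mem_singleton_iff] at hz h
      omega
    have hlt : weightAbove M q.betaSet < n := by
      have := weightAbove_insert_sdiff p.isMaya_betaSet hx hx' hMx (by omega)
      rw [hq]; omega
    obtain ⟨r, hr, hrcore⟩ := ih _ hlt q hMq rfl
    exact ⟨r, .head ⟨x, hx, hx', hq⟩ hr, hrcore⟩

theorem sameECore_of_charge_runner_eq {e : ℕ} (he : 0 < e) {p q : Partition}
    (h : ∀ c : ℤ, charge (runner e c p.betaSet) = charge (runner e c q.betaSet)) :
    SameECore e p q := by
  obtain ⟨cp, hcp⟩ := exists_hasECore he p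
  obtain ⟨cq, hcq⟩ := exists_hasECore he q
  have hcore : cp = cq := eq_of_isECore_of_charge_runner_eq he hcp.2 hcq.2 fun c => by
    rw [charge_runner_of_reflTransGen he hcp.1, charge_runner_of_reflTransGen he hcq.1, h]
  exact ⟨cp, hcp, hcore ▸ hcq⟩

def row (A : Set (ℤ × Fin 2)) (j : Fin 2) : Set ℤ := {v | (v, j) ∈ A}

theorem row_abacus (w : Partition × Partition) (s : ℤ × ℤ) (j : Fin 2) :
    row (abacus w s) j = (comp w j).chargedBetaSet (if j = 0 then s.1 else s.2) := by
  fin_cases j <;> rfl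

theorem isMaya_row_abacus (w : Partition × Partition) (s : ℤ × ℤ) (j : Fin 2) :
    IsMaya (row (abacus w s) j) := by
  rw [row_abacus]; exact Partition.isMaya_chargedBetaSet _ _

theorem charge_row_abacus (w : Partition × Partition) (s : ℤ × ℤ) (j : Fin 2) :
    charge (row (abacus w s) j) = (if j = 0 then s.1 else s.2) + 1 := by
  rw [row_abacus]; exact Partition.charge_chargedBetaSet _ _

/-- Inverse of the 2-quotient: reassembles one β-set from the two rows of an abacus. -/
def mergeRows (a : Fin 2 → ℤ) (b : ℤ × Fin 2) : ℤ := 2 * b.1 + a b.2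

theorem mergeRows_bijective {a : Fin 2 → ℤ} (ha : Odd (a 0 - a 1)) :
    Function.Bijective (mergeRows a) := by
  obtain ⟨k, hk⟩ := ha
  refine ⟨fun ⟨v, j⟩ ⟨v', j'⟩ h => ?_, fun z => ?_⟩
  · simp only [mergeRows] at h
    obtain rfl | rfl : j = 0 ∨ j = 1 := by omega
    all_goals obtain rfl | rfl : j' = 0 ∨ j' = 1 := by omega
    all_goals first | omega | (congr 1; omega)
  · rcases Int.even_or_odd' (z - a 0) with ⟨v, hv | hv⟩
    · exact ⟨(v, 0), by simp only [mergeRows]; omega⟩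
    · exact ⟨(v + k + 1, 1), by simp only [mergeRows]; omega⟩

theorem isMaya_image_mergeRows {a : Fin 2 → ℤ} (ha : Odd (a 0 - a 1))
    {A : Set (ℤ × Fin 2)} (hA : ∀ j, IsMaya (row A j)) : IsMaya (mergeRows a '' A) := by
  choose M hM using fun j => (hA j).1
  choose B hB using fun j => (hA j).2
  refine ⟨⟨min (2 * M 0 + a 0) (2 * M 1 + a 1), fun z hz => ?_⟩,
    ⟨max (2 * B 0 + a 0) (2 * B 1 + a 1), ?_⟩⟩
  · obtain ⟨⟨v, j⟩, rfl⟩ := (mergeRows_bijective ha).2 z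
    refine ⟨(v, j), hM j ?_, rfl⟩
    simp only [Set.mem_Iio, mergeRows, lt_min_iff] at hz ⊢
    obtain rfl | rfl : j = 0 ∨ j = 1 := by omega
    all_goals omega
  · rintro _ ⟨⟨v, j⟩, hv, rfl⟩
    have : v ≤ B j := hB j hv
    simp only [mergeRows, le_max_iff]
    obtain rfl | rfl : j = 0 ∨ j = 1 := by omega
    all_goals omega

/-- The shape of an `e`-period, see `IsEPeriodOf`. -/
def columnRun (e : ℕ) (x : ℤ) (r : ℕ → Fin 2) : Set (ℤ × Fin 2) :=
  {b | ∃ i : ℕ, i < e ∧ b = ((x - i : ℤ), r i)}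

theorem shiftRight_columnRun (e : ℕ) (x : ℤ) (r : ℕ → Fin 2) :
    shiftRight (columnRun e x r) = columnRun e (x + 1) r := by
  ext ⟨v, j⟩
  simp only [shiftRight, columnRun, Set.mem_ofPred_eq, Prod.mk.injEq]
  exact exists_congr fun i => and_congr_right' (and_congr_left' (by omega))

theorem finite_columnRun (e : ℕ) (x : ℤ) (r : ℕ → Fin 2) : (columnRun e x r).Finite :=
  ((Set.finite_Iio e).image fun i : ℕ => ((x - i : ℤ), r i)).subset
    fun _ ⟨i, hi, hb⟩ => ⟨i, hi, hb.symm⟩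

theorem row_columnRun (e : ℕ) (x : ℤ) (r : ℕ → Fin 2) (j : Fin 2) :
    row (columnRun e x r) j = (fun i : ℕ => x - i) '' {i | i < e ∧ r i = j} := by
  ext v
  simp only [row, columnRun, Set.mem_ofPred_eq, Set.mem_image, Prod.mk.injEq]
  exact ⟨fun ⟨i, hi, hv, hj⟩ => ⟨i, ⟨hi, hj.symm⟩, hv.symm⟩,
    fun ⟨i, ⟨hi, hj⟩, hv⟩ => ⟨i, hi, hv.symm, hj.symm⟩⟩

theorem finite_row_columnRun (e : ℕ) (x : ℤ) (r : ℕ → Fin 2) (j : Fin 2) :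
    (row (columnRun e x r) j).Finite := by
  rw [row_columnRun]
  exact ((Set.finite_Iio e).subset fun i hi => hi.1).image _

theorem ncard_row_columnRun (e : ℕ) (x : ℤ) (r : ℕ → Fin 2) (j : Fin 2) :
    (row (columnRun e x r) j).ncard = {i | i < e ∧ r i = j}.ncard := by
  rw [row_columnRun, Set.ncard_image_of_injective _ fun i i' h => by simpa using h]

theorem SlInfEdge.exists_columnRun {e : ℕ} {s : ℤ × ℤ} {w w' : Partition × Partition}
    (hE : SlInfEdge e s w w') : ∃ x r, columnRun e x r ⊆ abacus w s ∧
      abacus w' s = (abacus w s \ columnRun e x r) ∪ columnRun e (x + 1) r := by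
  obtain ⟨k, -, -, P, ⟨Q, hQ, rfl⟩, hA', -⟩ := hE
  obtain ⟨x, r, hP, hbeads, -⟩ := hQ k le_rfl
  refine ⟨x, r, ?_, ?_⟩
  · rintro _ ⟨i, hi, rfl⟩
    exact (hbeads i hi).1
  · rw [hA', hP, ← shiftRight_columnRun]
    rfl

theorem disjoint_sdiff_of_charge_eq {U P Q : Set ℤ} (hU : IsMaya U) (hPU : P ⊆ U)
    (hP : P.Finite) (hQ : Q.Finite) (hcard : Q.ncard = P.ncard)
    (hcharge : charge ((U \ P) ∪ Q) = charge U) : Disjoint (U \ P) Q := by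
  rw [← Set.union_sdiff_self, charge_union_of_disjoint (hU.sdiff hP) hQ.sdiff
    Set.disjoint_sdiff_right, charge_sdiff_of_subset hU hP hPU] at hcharge
  have hQ' : Q \ (U \ P) = Q :=
    Set.eq_of_subset_of_ncard_le Set.sdiff_subset (by omega) hQ
  exact (sdiff_eq_left.1 hQ').symm

theorem disjoint_abacus_sdiff_columnRun {e : ℕ} {s : ℤ × ℤ} {w w' : Partition × Partition}
    {x : ℤ} {r : ℕ → Fin 2} (hsub : columnRun e x r ⊆ abacus w s)
    (hA' : abacus w' s = (abacus w s \ columnRun e x r) ∪ columnRun e (x + 1) r) :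
    Disjoint (abacus w s \ columnRun e x r) (columnRun e (x + 1) r) := by
  refine Set.disjoint_left.2 fun ⟨v, j⟩ hvA hvQ => ?_
  have hrow' : (row (abacus w s) j \ row (columnRun e x r) j) ∪ row (columnRun e (x + 1) r) j =
      row (abacus w' s) j := by
    rw [hA']; rfl
  have hrow := disjoint_sdiff_of_charge_eq (isMaya_row_abacus w s j)
    (show row (columnRun e x r) j ⊆ row (abacus w s) j from fun _ h => hsub h)
    (finite_row_columnRun e x r j) (finite_row_columnRun e (x + 1) r j)
    (by rw [ncard_row_columnRun, ncard_row_columnRun])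
    (by rw [hrow', charge_row_abacus, charge_row_abacus])
  exact Set.disjoint_left.1 hrow hvA hvQ

theorem existsUnique_lt_dvd_sub_two_mul {e : ℕ} (he : Odd e) (n : ℤ) :
    ∃! i : ℕ, i < e ∧ (e : ℤ) ∣ n - 2 * i := by
  have : NeZero e := ⟨he.pos.ne'⟩
  set u := ZMod.unitOfCoprime 2 he.coprime_two_left
  have hdvd : ∀ i : ℕ, (e : ℤ) ∣ n - 2 * i ↔ (i : ZMod e) = ↑u⁻¹ * n := fun i => by
    rw [← ZMod.intCast_zmod_eq_zero_iff_dvd, Units.eq_inv_mul_iff_mul_eq,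
      ZMod.coe_unitOfCoprime]
    push_cast
    rw [sub_eq_zero, eq_comm]
  refine ⟨(↑u⁻¹ * n : ZMod e).val, ⟨ZMod.val_lt _, (hdvd _).2 (ZMod.natCast_zmod_val _)⟩, ?_⟩
  rintro i ⟨hi, hi'⟩
  rw [← (hdvd i).1 hi', ZMod.val_cast_of_lt hi]

/-- Since `e` is odd, `2x, 2x - 2, …, 2x - 2(e - 1)` represent every residue mod `e`
exactly once. -/
theorem ncard_runner_image_columnRun {e : ℕ} (he : Odd e) {a : Fin 2 → ℤ}
    (ha : ∀ j, (e : ℤ) ∣ a j) (x : ℤ) (r : ℕ → Fin 2) (c : ℤ) :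
    (runner e c (mergeRows a '' columnRun e x r)).ncard = 1 := by
  obtain ⟨i₀, ⟨hi₀, hdvd₀⟩, huniq⟩ := existsUnique_lt_dvd_sub_two_mul he (2 * x - c)
  obtain ⟨m₀, hm₀⟩ : (e : ℤ) ∣ mergeRows a (x - i₀, r i₀) - c := by
    have := dvd_add hdvd₀ (ha (r i₀))
    rwa [show mergeRows a (x - i₀, r i₀) - c = 2 * x - c - 2 * i₀ + a (r i₀) by
      simp only [mergeRows]; ring]
  rw [Set.ncard_eq_one]
  refine ⟨m₀, Set.ext fun m => ⟨?_, ?_⟩⟩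
  · rintro ⟨_, ⟨i, hi, rfl⟩, hm⟩
    have hdvd : (e : ℤ) ∣ 2 * x - c - 2 * i := by
      obtain ⟨k, hk⟩ := ha (r i)
      simp only [mergeRows] at hm
      exact ⟨m - k, by linear_combination hm - hk⟩
    obtain rfl := huniq i ⟨hi, hdvd⟩
    exact mul_left_cancel₀ (by exact_mod_cast he.pos.ne' : (e : ℤ) ≠ 0) (by linarith)
  · rintro rfl
    exact ⟨_, ⟨i₀, hi₀, rfl⟩, by linarith⟩

section Crystal

variable {e : ℕ} {a : Fin 2 → ℤ} {s : ℤ × ℤ}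

theorem SlInfEdge.charge_runner_image (he : Odd e) (ha : ∀ j, (e : ℤ) ∣ a j)
    (hodd : Odd (a 0 - a 1)) {w w' : Partition × Partition} (hE : SlInfEdge e s w w')
    (c : ℤ) :
    charge (runner e c (mergeRows a '' abacus w' s)) =
      charge (runner e c (mergeRows a '' abacus w s)) := by
  obtain ⟨x, r, hsub, hA'⟩ := hE.exists_columnRun
  have hinj := (mergeRows_bijective hodd).1
  rw [hA', Set.image_union, Set.image_sdiff hinj]
  refine charge_runner_sdiff_union (by exact_mod_cast he.pos)
    (isMaya_image_mergeRows hodd (isMaya_row_abacus w s)) (Set.image_mono hsub)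
    ((finite_columnRun e x r).image _) ((finite_columnRun e (x + 1) r).image _) ?_
    (by rw [ncard_runner_image_columnRun he ha, ncard_runner_image_columnRun he ha])
  rw [← Set.image_sdiff hinj]
  exact (Set.disjoint_image_iff hinj).2 (disjoint_abacus_sdiff_columnRun hsub hA')

theorem charge_runner_image_of_reflTransGen (he : Odd e) (ha : ∀ j, (e : ℤ) ∣ a j)
    (hodd : Odd (a 0 - a 1)) {w w' : Partition × Partition}
    (h : Relation.ReflTransGen (SlInfEdge e s) w w') (c : ℤ) :
    charge (runner e c (mergeRows a '' abacus w' s)) =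
      charge (runner e c (mergeRows a '' abacus w s)) := by
  induction h with
  | refl => rfl
  | tail _ hE ih => rw [hE.charge_runner_image he ha hodd c, ih]

end Crystal

theorem Partition.mem_chargedBetaSet_iff_of_eq_runner {q : Partition} {e ρ c κ s a : ℤ}
    {U : Set ℤ} (h : q.chargedBetaSet c = runner e ρ U) (hκ : charge (runner e ρ U) = κ)
    (ha : a = ρ + e * (κ - 1 - s)) (v : ℤ) : v ∈ q.chargedBetaSet s ↔ e * v + a ∈ U := by
  have hc : c = κ - 1 := by
    rw [← hκ, ← h, Partition.charge_chargedBetaSet]; ring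
  have hshift : v ∈ q.chargedBetaSet s ↔ v - s + c ∈ q.chargedBetaSet c := by
    simp only [Partition.chargedBetaSet_eq_preimage, Set.mem_preimage, add_sub_cancel_right]
  rw [hshift, h, hc, ha]
  simp only [runner, Set.mem_preimage]
  ring_nf

theorem IsTwoQuotient.exists_eq_runner {lam q₁ q₂ : Partition} (h : IsTwoQuotient lam q₁ q₂) :
    (∃ c, q₁.chargedBetaSet c = runner 2 (-1) lam.betaSet) ∧
      ∃ c, q₂.chargedBetaSet c = runner 2 0 lam.betaSet := by
  obtain ⟨⟨c₁, h₁⟩, ⟨c₂, h₂⟩⟩ := h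
  refine ⟨⟨c₁, h₁.trans (Set.ext fun z => ?_)⟩, ⟨c₂, h₂.trans (Set.ext fun z => ?_)⟩⟩ <;>
    simp only [runner, Set.mem_preimage, Set.mem_ofPred_eq] <;> ring_nf

theorem charge_runner_staircase_even (u : ℕ) :
    charge (runner 2 0 (staircase (2 * u)).betaSet) = u + 1 ∧
      charge (runner 2 (-1) (staircase (2 * u)).betaSet) = 1 - u := by
  have h₀ : runner 2 0 (staircase (2 * u)).betaSet = Set.Iio ((u : ℤ) + 1) := by
    ext m
    simp only [runner, Set.mem_preimage, Set.mem_Iio, Partition.betaSet, staircase,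
      Set.mem_ofPred_eq]
    refine ⟨fun ⟨k, hk⟩ => by omega, fun hm => ?_⟩
    rcases le_or_gt (-(u : ℤ)) m with h | h
    · exact ⟨(u - m).toNat, by omega⟩
    · exact ⟨(-2 * m).toNat, by omega⟩
  have h₁ : runner 2 (-1) (staircase (2 * u)).betaSet = Set.Iio (1 - (u : ℤ)) := by
    ext m
    simp only [runner, Set.mem_preimage, Set.mem_Iio, Partition.betaSet, staircase,
      Set.mem_ofPred_eq]
    exact ⟨fun ⟨k, hk⟩ => by omega, fun hm => ⟨(1 - 2 * m).toNat, by omega⟩⟩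
  rw [h₀, h₁, charge_Iio, charge_Iio]
  exact ⟨rfl, rfl⟩

theorem charge_runner_staircase_odd (u : ℕ) :
    charge (runner 2 0 (staircase (2 * u + 1)).betaSet) = -u ∧
      charge (runner 2 (-1) (staircase (2 * u + 1)).betaSet) = u + 2 := by
  have h₀ : runner 2 0 (staircase (2 * u + 1)).betaSet = Set.Iio (-(u : ℤ)) := by
    ext m
    simp only [runner, Set.mem_preimage, Set.mem_Iio, Partition.betaSet, staircase,
      Set.mem_ofPred_eq]
    exact ⟨fun ⟨k, hk⟩ => by omega, fun hm => ⟨(-2 * m).toNat, by omega⟩⟩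
  have h₁ : runner 2 (-1) (staircase (2 * u + 1)).betaSet = Set.Iio ((u : ℤ) + 2) := by
    ext m
    simp only [runner, Set.mem_preimage, Set.mem_Iio, Partition.betaSet, staircase,
      Set.mem_ofPred_eq]
    refine ⟨fun ⟨k, hk⟩ => by omega, fun hm => ?_⟩
    rcases le_or_gt (-(u : ℤ)) m with h | h
    · exact ⟨(u + 1 - m).toNat, by omega⟩
    · exact ⟨(1 - 2 * m).toNat, by omega⟩
  rw [h₀, h₁, charge_Iio, charge_Iio]
  exact ⟨rfl, rfl⟩

/-- The offsets with which `mergeRows` inverts the twisted 2-quotient `τ`. -/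
def twistOffset (e t : ℕ) : Fin 2 → ℤ := if t % 2 = 0 then ![(e : ℤ), 0] else ![0, -(e : ℤ)]

theorem dvd_twistOffset (e t : ℕ) (j : Fin 2) : (e : ℤ) ∣ twistOffset e t j := by
  unfold twistOffset
  split_ifs <;> fin_cases j <;> simp

theorem odd_twistOffset_sub {e : ℕ} (he : Odd e) (t : ℕ) :
    Odd (twistOffset e t 0 - twistOffset e t 1) := by
  unfold twistOffset
  split_ifs <;> simpa using he

theorem IsTwistedQuotient.mem_abacus_iff {e t : ℕ} (he : Odd e) {lam : Partition}
    {bp : Partition × Partition} (h : IsTwistedQuotient t lam bp) (b : ℤ × Fin 2) :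
    b ∈ abacus bp (tauCharge e t) ↔ mergeRows (twistOffset e t) b ∈ lam.betaSet := by
  obtain ⟨hcore, hquot⟩ := h
  have hcharge : ∀ ρ, charge (runner 2 ρ lam.betaSet) =
      charge (runner 2 ρ (staircase t).betaSet) := fun ρ =>
    (charge_runner_of_reflTransGen two_pos hcore.1 ρ).symm
  obtain ⟨f, rfl⟩ := he
  obtain ⟨v, j⟩ := b
  rcases Nat.even_or_odd' t with ⟨u, rfl | rfl⟩
  · rw [if_pos (by omega)] at hquot
    obtain ⟨⟨c₁, h₁⟩, ⟨c₂, h₂⟩⟩ := hquot.exists_eq_runner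
    obtain ⟨hs₀, hs₁⟩ := charge_runner_staircase_even u
    obtain rfl | rfl : j = 0 ∨ j = 1 := by omega
    · exact Partition.mem_chargedBetaSet_iff_of_eq_runner h₁ ((hcharge _).trans hs₁)
        (by simp [tauCharge, twistOffset]; omega) v
    · exact Partition.mem_chargedBetaSet_iff_of_eq_runner h₂ ((hcharge _).trans hs₀)
        (by simp [tauCharge, twistOffset]) v
  · rw [if_neg (by omega)] at hquot
    obtain ⟨⟨c₁, h₁⟩, ⟨c₂, h₂⟩⟩ := hquot.exists_eq_runner
    obtain ⟨hs₀, hs₁⟩ := charge_runner_staircase_odd u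
    obtain rfl | rfl : j = 0 ∨ j = 1 := by omega
    · exact Partition.mem_chargedBetaSet_iff_of_eq_runner h₂ ((hcharge _).trans hs₀)
        (by simp [tauCharge, twistOffset]; omega) v
    · exact Partition.mem_chargedBetaSet_iff_of_eq_runner h₁ ((hcharge _).trans hs₁)
        (by simp [tauCharge, twistOffset]; omega) v

theorem IsTwistedQuotient.betaSet_eq_image {e t : ℕ} (he : Odd e) {lam : Partition}
    {bp : Partition × Partition} (h : IsTwistedQuotient t lam bp) :
    lam.betaSet = mergeRows (twistOffset e t) '' abacus bp (tauCharge e t) := by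
  have hsurj := (mergeRows_bijective (odd_twistOffset_sub he t)).2
  rw [show abacus bp (tauCharge e t) = mergeRows (twistOffset e t) ⁻¹' lam.betaSet from
    Set.ext (h.mem_abacus_iff he), Set.image_preimage_eq _ hsurj]

theorem atilde_preserves_ecore_general
    (e t : ℕ) (he : Odd e)
    (lam : Partition) (bp : Partition × Partition)
    (htau : IsTwistedQuotient t lam bp)
    (nu : Partition × Partition)
    (hreach : Relation.ReflTransGen (SlInfEdge e (tauCharge e t)) bp nu)
    (mu : Partition) (hmu : IsTwistedQuotient t mu nu) :
    SameECore e lam mu := by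
  refine sameECore_of_charge_runner_eq he.pos fun c => ?_
  rw [htau.betaSet_eq_image he, hmu.betaSet_eq_image he]
  exact (charge_runner_image_of_reflTransGen he (dvd_twistOffset e t)
    (odd_twistOffset_sub he t) hreach c).symm

/-- If `λ` has 2-core `Δ_t` and totally `e`-periodic abacus, then for any
`ν` in the `sl_∞`-crystal obtained from `τ(λ)` by applying `ã_σ` (i.e. reachable from
`τ(λ)` by a path of `sl_∞`-crystal edges), the partition `μ = τ⁻¹(ν)` has the same
`e`-core as `λ`. -/
theorem atilde_preserves_ecore
    (e t : ℕ) (he : Odd e) (he3 : 3 ≤ e)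
    (lam : Partition) (bp : Partition × Partition)
    (htau : IsTwistedQuotient t lam bp)
    (htp : TotallyPeriodic e (abacus bp (tauCharge e t)))
    (nu : Partition × Partition)
    (hreach : Relation.ReflTransGen (SlInfEdge e (tauCharge e t)) bp nu)
    (mu : Partition) (hmu : IsTwistedQuotient t mu nu) :
    SameECore e lam mu :=
  atilde_preserves_ecore_general e t he lam bp htau nu hreach mu hmu

end GUnBranching
end

section
/- Let e ≥ 3 be odd. For all integers t ≥ 0 and m ≥ 0, the partition Δ_t ⊔ (1^{2m}) has 2-core Δ_t and twisted 2-quotient τ(Δ_t ⊔ 1^{2m}) = |(1^m, ∅), s_t⟩. -/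
namespace GUnBranching

/-! The β-set of `Δ_t ⊔ 1^r` consists of every integer `≤ 1 - t` except the single gap
`1 - t - r`, together with every other integer from `2 - t` up to `t`. Removing a domino moves
the bead two steps above the gap down into it, so the gap climbs by `2`; after `m` removals from
`Δ_t ⊔ 1^{2m}` the gap sits at `1 - t` and the β-set is that of `Δ_t`, in which every bead has
another bead two steps below it, so no domino can be removed. On the 2-abacus the gap
`1 - t - 2m` lies on the runner of parity `t + 1`, which the staircase beads avoid: that runner
is the column `1^m`, while the other runner is full, i.e. `∅`. -/

lemma Partition.ext_part {p q : Partition} (h : p.part = q.part) : p = q := by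
  cases p; cases q; subst h; rfl

lemma staircaseColumn_zero (t : ℕ) : staircaseColumn t 0 = staircase t := by
  apply Partition.ext_part
  funext k
  simp only [staircase, staircaseColumn]
  split_ifs <;> omega

lemma mem_betaSet_staircaseColumn (t r : ℕ) (z : ℤ) :
    z ∈ (staircaseColumn t r).betaSet ↔
      (z ≤ 1 - t ∧ z ≠ 1 - t - r) ∨ (2 - t ≤ z ∧ z ≤ t ∧ (z - t) % 2 = 0) := by
  simp only [Partition.betaSet, staircaseColumn, Set.mem_ofPred_eq]
  constructor
  · rintro ⟨k, rfl⟩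
    split_ifs <;> omega
  · rintro (⟨h_le, h_ne⟩ | ⟨h_ge, h_le, h_par⟩)
    · rcases le_or_gt z (-(t : ℤ) - r) with h | h
      · exact ⟨(-z).toNat, by split_ifs <;> omega⟩
      · exact ⟨(1 - z).toNat, by split_ifs <;> omega⟩
    · exact ⟨(((t : ℤ) - z) / 2).toNat, by split_ifs <;> omega⟩

lemma mem_betaSet_staircase (t : ℕ) (z : ℤ) :
    z ∈ (staircase t).betaSet ↔ z ≤ -t ∨ (2 - t ≤ z ∧ z ≤ t ∧ (z - t) % 2 = 0) := by
  rw [← staircaseColumn_zero, mem_betaSet_staircaseColumn]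
  push_cast
  omega

lemma chargedBetaSet_column (m : ℕ) (c : ℤ) :
    (column m).chargedBetaSet c = {z | z ≤ c + 1 ∧ z ≠ c + 1 - m} := by
  ext z
  simp only [Partition.chargedBetaSet, column, threeTwoOne, Set.mem_ofPred_eq]
  constructor
  · rintro ⟨k, rfl⟩
    split_ifs <;> omega
  · rintro ⟨h_le, h_ne⟩
    rcases le_or_gt z (c - m) with h | h
    · exact ⟨(c - z).toNat, by split_ifs <;> omega⟩
    · exact ⟨(c + 1 - z).toNat, by split_ifs <;> omega⟩

lemma chargedBetaSet_emptyPartition (c : ℤ) :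
    emptyPartition.chargedBetaSet c = {z | z ≤ c} := by
  ext z
  simp only [Partition.chargedBetaSet, emptyPartition, Set.mem_ofPred_eq]
  constructor
  · rintro ⟨k, rfl⟩
    omega
  · intro h
    exact ⟨(c - z).toNat, by omega⟩

lemma removeHook_two_staircaseColumn (t r : ℕ) :
    RemoveHook 2 (staircaseColumn t (r + 2)) (staircaseColumn t r) := by
  refine ⟨1 - t - r, ?_, ?_, ?_⟩
  · rw [mem_betaSet_staircaseColumn]
    omega
  · rw [mem_betaSet_staircaseColumn]
    omega
  · ext z
    simp only [Set.mem_insert_iff, Set.mem_sdiff, Set.mem_singleton_iff,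
      mem_betaSet_staircaseColumn]
    push_cast
    omega

lemma isECore_two_staircase (t : ℕ) : IsECore 2 (staircase t) := by
  rintro mu ⟨x, hx, hx_sub, -⟩
  rw [mem_betaSet_staircase] at hx hx_sub
  push_cast at hx_sub
  omega

lemma hasECore_two_staircaseColumn (t m : ℕ) :
    HasECore 2 (staircaseColumn t (2 * m)) (staircase t) := by
  refine ⟨?_, isECore_two_staircase t⟩
  induction m with
  | zero => rw [staircaseColumn_zero]
  | succ m ih => exact .head (removeHook_two_staircaseColumn t (2 * m)) ih

lemma isTwoQuotient_staircaseColumn_of_even {t : ℕ} (ht : t % 2 = 0) (m : ℕ) :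
    IsTwoQuotient (staircaseColumn t (2 * m)) (column m) emptyPartition := by
  refine ⟨⟨-((t : ℤ) / 2), ?_⟩, ⟨(t : ℤ) / 2, ?_⟩⟩
    <;> ext z
    <;> simp only [chargedBetaSet_column, chargedBetaSet_emptyPartition, Set.mem_ofPred_eq,
      mem_betaSet_staircaseColumn]
    <;> push_cast
    <;> omega

lemma isTwoQuotient_staircaseColumn_of_odd {t : ℕ} (ht : t % 2 = 1) (m : ℕ) :
    IsTwoQuotient (staircaseColumn t (2 * m)) emptyPartition (column m) := by
  refine ⟨⟨((t : ℤ) + 1) / 2, ?_⟩, ⟨-(((t : ℤ) + 1) / 2), ?_⟩⟩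
    <;> ext z
    <;> simp only [chargedBetaSet_column, chargedBetaSet_emptyPartition, Set.mem_ofPred_eq,
      mem_betaSet_staircaseColumn]
    <;> push_cast
    <;> omega

theorem twisted_quotient_staircase_even_column_general
    (t m : ℕ) :
    IsTwistedQuotient t (staircaseColumn t (2 * m)) (column m, emptyPartition) := by
  refine ⟨hasECore_two_staircaseColumn t m, ?_⟩
  split_ifs with ht
  · exact isTwoQuotient_staircaseColumn_of_even ht m
  · exact isTwoQuotient_staircaseColumn_of_odd (Nat.mod_two_ne_zero.mp ht) m

/-- For `t ≥ 0`, `m ≥ 0`, the partition `Δ_t ⊔ 1^{2m}` has 2-core `Δ_t`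
and twisted 2-quotient `τ(Δ_t ⊔ 1^{2m}) = |(1^m, ∅), s_t⟩`. -/
theorem twisted_quotient_staircase_even_column
    (e t m : ℕ) (he : Odd e) (he3 : 3 ≤ e) :
    IsTwistedQuotient t (staircaseColumn t (2 * m)) (column m, emptyPartition) :=
  twisted_quotient_staircase_even_column_general t m

end GUnBranching
end

section
/- Let n ≥ 0 and 0 ≤ j ≤ n be integers. The 2-core of the partition 2^j ⊔ 1^{2n−2j} (j parts equal to 2 and 2n−2j parts equal to 1) is the empty partition, and its 2-quotient (λ1, λ2) equals (1^{n−j/2}, 1^{j/2}) if j is even and (1^{(j−1)/2}, 1^{n−(j−1)/2}) if j is odd. Consequently, the map j ↦ (λ1, λ2) is a bijection from {0, 1, …, n} onto the set of bipartitions of size n both of whose components are column partitions (of the form 1^a). -/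
namespace GUnBranching

lemma Partition.chargedBetaSet_zero (p : Partition) : p.chargedBetaSet 0 = p.betaSet := by
  simp [Partition.chargedBetaSet, Partition.betaSet]

lemma threeTwoOne_zero_part (p q k : ℕ) :
    (threeTwoOne 0 p q).part k = if k < p then 2 else if k < p + q then 1 else 0 := by
  simp only [threeTwoOne]
  split_ifs <;> omega

lemma betaSet_threeTwoOne_zero (p q : ℕ) :
    (threeTwoOne 0 p q).betaSet = {z : ℤ | z ≤ 2 ∧ z ≠ 2 - p ∧ z ≠ 1 - p - q} := by
  ext z
  simp only [Partition.betaSet, Set.mem_ofPred_eq, threeTwoOne_zero_part]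
  constructor
  · rintro ⟨k, rfl⟩
    split_ifs <;> push_cast <;> omega
  · rintro ⟨hz, hz₁, hz₂⟩
    by_cases h₁ : 3 - (p : ℤ) ≤ z
    · exact ⟨(2 - z).toNat, by rw [if_pos (by omega)]; push_cast; omega⟩
    by_cases h₂ : 2 - (p : ℤ) - q ≤ z
    · exact ⟨(1 - z).toNat, by rw [if_neg (by omega), if_pos (by omega)]; push_cast; omega⟩
    · exact ⟨(-z).toNat, by rw [if_neg (by omega), if_neg (by omega)]; push_cast; omega⟩

lemma betaSet_emptyPartition : emptyPartition.betaSet = {z : ℤ | z ≤ 0} := by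
  ext z
  simp only [Partition.betaSet, emptyPartition, Set.mem_ofPred_eq]
  exact ⟨by rintro ⟨k, rfl⟩; omega, fun hz => ⟨(-z).toNat, by omega⟩⟩

lemma threeTwoOne_zero_zero_zero : threeTwoOne 0 0 0 = emptyPartition :=
  Partition.ext_part <| funext fun k => by simp [threeTwoOne_zero_part, emptyPartition]

lemma isECore_emptyPartition (e : ℕ) : IsECore e emptyPartition := by
  rintro mu ⟨x, hx, hxe, -⟩
  simp only [betaSet_emptyPartition, Set.mem_ofPred_eq] at hx hxe
  omega

lemma removeHook_two_threeTwoOne_ones (p q : ℕ) :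
    RemoveHook 2 (threeTwoOne 0 p (q + 2)) (threeTwoOne 0 p q) := by
  refine ⟨1 - p - q, ?_, ?_, ?_⟩ <;>
    simp only [betaSet_threeTwoOne_zero, Set.ext_iff, Set.mem_insert_iff, Set.mem_sdiff,
      Set.mem_ofPred_eq, Set.mem_singleton_iff] <;> push_cast <;> omega

lemma removeHook_two_threeTwoOne_twos (p : ℕ) :
    RemoveHook 2 (threeTwoOne 0 (p + 1) 0) (threeTwoOne 0 p 0) := by
  refine ⟨2 - p, ?_, ?_, ?_⟩ <;>
    simp only [betaSet_threeTwoOne_zero, Set.ext_iff, Set.mem_insert_iff, Set.mem_sdiff,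
      Set.mem_ofPred_eq, Set.mem_singleton_iff] <;> push_cast <;> omega

lemma reflTransGen_removeHook_two_threeTwoOne (p m : ℕ) :
    Relation.ReflTransGen (RemoveHook 2) (threeTwoOne 0 p (2 * m)) emptyPartition := by
  induction m with
  | zero =>
    rw [← threeTwoOne_zero_zero_zero]
    induction p with
    | zero => exact .refl
    | succ p ih => exact .head (removeHook_two_threeTwoOne_twos p) ih
  | succ m ih => exact .head (removeHook_two_threeTwoOne_ones p (2 * m)) ih

lemma hasECore_two_threeTwoOne (p m : ℕ) :
    HasECore 2 (threeTwoOne 0 p (2 * m)) emptyPartition :=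
  ⟨reflTransGen_removeHook_two_threeTwoOne p m, isECore_emptyPartition 2⟩

lemma column_injective : Function.Injective column := by
  intro a b h
  have h_part := congrFun (congrArg Partition.part h) (min a b)
  simp only [column, threeTwoOne_zero_part] at h_part
  split_ifs at h_part <;> omega

lemma isTwoQuotient_threeTwoOne {n j : ℕ} (hj : j ≤ n) :
    IsTwoQuotient (threeTwoOne 0 j (2 * n - 2 * j))
      (if j % 2 = 0 then column (n - j / 2) else column ((j - 1) / 2))
      (if j % 2 = 0 then column (j / 2) else column (n - (j - 1) / 2)) := by
  constructor <;> refine ⟨0, ?_⟩ <;>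
    split_ifs <;>
    simp only [Partition.chargedBetaSet_zero, column, betaSet_threeTwoOne_zero, Set.ext_iff,
      Set.mem_ofPred_eq] <;> push_cast <;> omega

/-- The 2-core of `2^j 1^{2n-2j}` (for `0 ≤ j ≤ n`) is empty, its
2-quotient is `(1^{n-j/2}, 1^{j/2})` for even `j` and `(1^{(j-1)/2}, 1^{n-(j-1)/2})` for
odd `j`, and `j ↦ (2-quotient)` is a bijection from `{0, …, n}` onto the set of
bipartitions of size `n` both of whose components are columns. -/
theorem two_one_quotient_bijection (n : ℕ) :
    (∀ j : ℕ, j ≤ n →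
      HasECore 2 (threeTwoOne 0 j (2 * n - 2 * j)) emptyPartition ∧
      IsTwoQuotient (threeTwoOne 0 j (2 * n - 2 * j))
        (if j % 2 = 0 then column (n - j / 2) else column ((j - 1) / 2))
        (if j % 2 = 0 then column (j / 2) else column (n - (j - 1) / 2))) ∧
    Set.BijOn
      (fun j : ℕ =>
        if j % 2 = 0 then (column (n - j / 2), column (j / 2))
        else (column ((j - 1) / 2), column (n - (j - 1) / 2)))
      (Set.Iic n)
      {bp : Partition × Partition | ∃ a b : ℕ, a + b = n ∧ bp = (column a, column b)} := by
  refine ⟨fun j hj => ⟨?_, isTwoQuotient_threeTwoOne hj⟩, ?_, ?_, ?_⟩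
  · rw [show 2 * n - 2 * j = 2 * (n - j) by omega]
    exact hasECore_two_threeTwoOne j (n - j)
  · intro j hj
    dsimp only
    split_ifs
    · exact ⟨n - j / 2, j / 2, by grind, rfl⟩
    · exact ⟨(j - 1) / 2, n - (j - 1) / 2, by grind, rfl⟩
  · intro j hj j' hj' h
    simp only [Set.mem_Iic] at hj hj'
    dsimp only at h
    split_ifs at h <;>
      obtain ⟨h₁, h₂⟩ := Prod.mk.inj h <;>
      have := column_injective h₁ <;> have := column_injective h₂ <;> omega
  · rintro _ ⟨a, b, rfl, rfl⟩
    by_cases h : 2 * b ≤ a + b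
    · exact ⟨2 * b, Set.mem_Iic.mpr h, by simp only; rw [if_pos (by omega)]; congr <;> omega⟩
    · exact ⟨2 * a + 1, Set.mem_Iic.mpr (by omega), by
        simp only; rw [if_neg (by omega)]; congr <;> omega⟩

end GUnBranching
end
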